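/- The affine bijections A, B, C, D of (ZMod 2)⟦X⟧ satisfy the wreath recursion of the automaton 𝒜, namely for every h ∈ (ZMod 2)⟦X⟧: A(X·h) = 1 + X·B(h), A(1 + X·h) = X·D(h), B(X·h) = 1 + X·D(h), B(1 + X·h) = X·B(h), C(X·h) = X·A(h), C(1 + X·h) = 1 + X·C(h), D(X·h) = X·C(h), and D(1 + X·h) = 1 + X·A(h). -/

import Mathlib

open PowerSeries

noncomputable section

/-- The ring of formal power series over the field with two elements. -/
abbrev R : Type := PowerSeries (ZMod 2)

/-- The multiplier `f = (1+X+X²)·(1+X²)⁻¹`. -/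
def f : R := (1 + X + X ^ 2) * (1 + X ^ 2)⁻¹

/-- `g_a = ((1+X)⁻¹)³`. -/
def ga : R := ((1 + X)⁻¹) ^ 3

/-- `g_b = (1+X+X²)·((1+X)⁻¹)³`. -/
def gb : R := (1 + X + X ^ 2) * ((1 + X)⁻¹) ^ 3

/-- `g_c = X·((1+X)⁻¹)³`. -/
def gc : R := X * ((1 + X)⁻¹) ^ 3

/-- `g_d = X²·((1+X)⁻¹)³`. -/
def gd : R := X ^ 2 * ((1 + X)⁻¹) ^ 3

lemma constantCoeff_f_ne_zero : constantCoeff (R := ZMod 2) f ≠ 0 := by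
  simp [f, map_mul, map_add, map_pow, PowerSeries.constantCoeff_inv]

/-- `f` as a unit of `R`. -/
def fU : Rˣ := Units.mkOfMulEqOne f f⁻¹ (PowerSeries.mul_inv_cancel f constantCoeff_f_ne_zero)

/-- The affine bijection `h ↦ h·u + g` for a unit `u` and `g : R`. -/
def affine (u : Rˣ) (g : R) : Equiv.Perm R := (Units.mulRight u).trans (Equiv.addRight g)

@[simp] lemma affine_apply (u : Rˣ) (g h : R) : affine u g h = h * u + g := rfl

/-- The affine bijection `A : h ↦ h·f + g_a`. -/
def A : Equiv.Perm R := affine fU ga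

/-- The affine bijection `B : h ↦ h·f + g_b`. -/
def B : Equiv.Perm R := affine fU gb

/-- The affine bijection `C : h ↦ h·f + g_c`. -/
def C : Equiv.Perm R := affine fU gc

/-- The affine bijection `D : h ↦ h·f + g_d`. -/
def D : Equiv.Perm R := affine fU gd

end

/-! In characteristic 2 we have `1 + X² = (1 + X)²`, so `f` and the translation parts `g_s` are all
polynomials times powers of `(1 + X)⁻¹`. Since the maps are affine with the common linear part
`h ↦ h·f`, the relation `S(ε + X·h) = c + X·T(h)` (with `ε, c ∈ {0, 1}`) is equivalent to the
identity `ε·f + g_s = c + X·g_t` between these rational functions, which is checked by clearing the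
denominator `1 + X`. -/

instance : CharP R 2 := charP_of_injective_ringHom PowerSeries.C_injective 2

theorem one_add_X_mul_inv : (1 + X : R) * (1 + X)⁻¹ = 1 :=
  PowerSeries.mul_inv_cancel _ (by simp)

theorem inv_one_add_X_sq : (1 + X ^ 2 : R)⁻¹ = (1 + X)⁻¹ ^ 2 := by
  rw [sq (1 + X)⁻¹, ← PowerSeries.mul_inv_rev, ← sq, CharTwo.add_sq, one_pow]

theorem f_eq_mul_inv_one_add_X_sq : f = (1 + X + X ^ 2) * (1 + X)⁻¹ ^ 2 := by
  rw [f, inv_one_add_X_sq]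

theorem ga_eq_one_add_X_mul_gb : ga = 1 + X * gb := by
  simp only [ga, gb]
  grind [one_add_X_mul_inv]

theorem gb_eq_one_add_X_mul_gd : gb = 1 + X * gd := by
  simp only [gb, gd]
  grind [one_add_X_mul_inv]

theorem gc_eq_X_mul_ga : gc = X * ga := by
  rw [gc, ga]

theorem gd_eq_X_mul_gc : gd = X * gc := by
  rw [gd, gc]
  ring

theorem f_add_ga : f + ga = X * gd := by
  simp only [f_eq_mul_inv_one_add_X_sq, ga, gd]
  grind [one_add_X_mul_inv]

theorem f_add_gb : f + gb = X * gb := by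
  simp only [f_eq_mul_inv_one_add_X_sq, gb]
  grind [one_add_X_mul_inv]

theorem f_add_gc : f + gc = 1 + X * gc := by
  simp only [f_eq_mul_inv_one_add_X_sq, gc]
  grind [one_add_X_mul_inv]

theorem f_add_gd : f + gd = 1 + X * ga := by
  simp only [f_eq_mul_inv_one_add_X_sq, ga, gd]
  grind [one_add_X_mul_inv]

/-- The affine bijections `A`, `B`, `C`, `D` of `(ZMod 2)⟦X⟧` satisfy the wreath recursion of the
automaton `𝒜`: `a = (b,d)σ`, `b = (d,b)σ`, `c = (a,c)`, `d = (c,a)`, where the boundary of the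
binary tree is identified with power series. -/
theorem wreath_recursion (h : R) :
    A (X * h) = 1 + X * B h ∧
    A (1 + X * h) = X * D h ∧
    B (X * h) = 1 + X * D h ∧
    B (1 + X * h) = X * B h ∧
    _root_.C (X * h) = X * A h ∧
    _root_.C (1 + X * h) = 1 + X * _root_.C h ∧
    D (X * h) = X * _root_.C h ∧
    D (1 + X * h) = 1 + X * A h := by
  simp only [A, B, _root_.C, D, affine_apply, fU, Units.val_mkOfMulEqOne]
  exact ⟨by linear_combination ga_eq_one_add_X_mul_gb, by linear_combination f_add_ga,
    by linear_combination gb_eq_one_add_X_mul_gd, by linear_combination f_add_gb,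
    by linear_combination gc_eq_X_mul_ga, by linear_combination f_add_gc,
    by linear_combination gd_eq_X_mul_gc, by linear_combination f_add_gd⟩
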